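/- arXiv:1711.00932 — 3 statements merged into one kernel-verified Lean document; each statement's English description precedes it below -/
import Mathlib

section
/- If W is a diagonal symmetric n×n matrix with entries W_{11} ≥ W_{22} ≥ ... ≥ W_{nn} lying in the Gårding cone Γ₂ (i.e. σ₁(W) > 0 and σ₂(W) > 0), then there exists a constant c₁ > 0 depending only on n such that σ₂^{11}(W)·W_{11} ≥ c₁·σ₂(W), where σ₂^{11}(W) = ∂σ₂/∂W_{11} = ∑_{j≥2} W_{jj}. -/
open Finset

noncomputable def s1 {n : ℕ} (x : Fin n → ℝ) : ℝ := ∑ i, x i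

noncomputable def s2 {n : ℕ} (x : Fin n → ℝ) : ℝ :=
  ((∑ i, x i) ^ 2 - ∑ i, (x i) ^ 2) / 2

noncomputable def s3 {n : ℕ} (x : Fin n → ℝ) : ℝ :=
  ((∑ i, x i) ^ 3 - 3 * (∑ i, x i) * (∑ i, (x i) ^ 2) + 2 * ∑ i, (x i) ^ 3) / 6

def Gamma2 {n : ℕ} : Set (Fin n → ℝ) := {x | 0 < s1 x ∧ 0 < s2 x}

def Gamma3 {n : ℕ} : Set (Fin n → ℝ) := {x | 0 < s1 x ∧ 0 < s2 x ∧ 0 < s3 x}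

theorem stmt_0 (n : ℕ) (hn : 2 ≤ n) :
    ∃ c1 : ℝ, 0 < c1 ∧ ∀ x : Fin n → ℝ,
      (∀ i j : Fin n, i ≤ j → x j ≤ x i) → x ∈ Gamma2 →
      c1 * s2 x ≤ (s1 x - x ⟨0, by omega⟩) * x ⟨0, by omega⟩ := by
  have hn1 : (0:ℝ) < (n:ℝ) + 1 := by positivity
  refine ⟨2 / ((n:ℝ) + 1), by positivity, ?_⟩
  intro x hsort hx
  obtain ⟨hS, h2⟩ := hx
  set a := x ⟨0, by omega⟩ with ha
  have hmax : ∀ i : Fin n, x i ≤ a := fun i => hsort ⟨0, by omega⟩ i (by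
    simp [Fin.le_def])
  have hSn : s1 x ≤ (n:ℝ) * a := by
    have : s1 x ≤ ∑ _i : Fin n, a := Finset.sum_le_sum fun i _ => hmax i
    simpa [mul_comm] using this
  have hQ : a ^ 2 ≤ ∑ i, (x i) ^ 2 :=
    Finset.single_le_sum (fun i _ => sq_nonneg (x i)) (Finset.mem_univ _)
  have h2' : 2 * s2 x = (s1 x) ^ 2 - ∑ i, (x i) ^ 2 := by
    simp only [s2, s1]; ring
  have hnpos : (0:ℝ) < (n:ℝ) := by
    exact_mod_cast (by omega : 0 < n)
  have ha0 : 0 < a := by nlinarith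
  have hgap : 0 < s1 x - a := by nlinarith
  rw [div_mul_eq_mul_div, div_le_iff₀ hn1]
  nlinarith [mul_nonneg hgap.le (sub_nonneg.mpr hSn)]
end

section
/- Let n ≥ 3 and λ = (λ₁,...,λₙ) ∈ Γ₂ with λ₁ ≥ ... ≥ λₙ. Suppose a > 0 satisfies a ≤ √(σ₂(λ)/(3(n−1)(n−2))) and σ₃(λ + a·𝟙) ≥ 0, where 𝟙 = (1,...,1). If λ₁ > 6(n−2)a, then (7/6)σ₂(λ) ≥ σ₂(λ) + ((n−1)(n−2)/2)a² ≥ (5/6)·σ₂^{11}(λ)·λ₁. -/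
open Finset

/-- `∑ f³ ≤ (∑ f²)^{3/2}` (one-sided). -/
lemma sum_cube_le {α : Type*} (S : Finset α) (f : α → ℝ) :
    ∑ i ∈ S, (f i) ^ 3 ≤ Real.sqrt (∑ i ∈ S, (f i) ^ 2) * ∑ i ∈ S, (f i) ^ 2 := by
  set z := Real.sqrt (∑ i ∈ S, (f i) ^ 2) with hz
  have step : ∀ i ∈ S, (f i) ^ 3 ≤ (f i) ^ 2 * z := by
    intro i hi
    have h1 : f i ≤ z := by
      have h2 : (f i) ^ 2 ≤ ∑ j ∈ S, (f j) ^ 2 :=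
        Finset.single_le_sum (fun j _ => sq_nonneg (f j)) hi
      calc f i ≤ |f i| := le_abs_self _
        _ = Real.sqrt ((f i) ^ 2) := (Real.sqrt_sq_eq_abs _).symm
        _ ≤ z := Real.sqrt_le_sqrt h2
    have h3 : (f i) ^ 3 = (f i) ^ 2 * f i := by ring
    rw [h3]
    exact mul_le_mul_of_nonneg_left h1 (sq_nonneg _)
  calc ∑ i ∈ S, (f i) ^ 3 ≤ ∑ i ∈ S, (f i) ^ 2 * z := Finset.sum_le_sum step
    _ = (∑ i ∈ S, (f i) ^ 2) * z := (Finset.sum_mul _ _ _).symm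
    _ = z * ∑ i ∈ S, (f i) ^ 2 := mul_comm _ _

/-- In `Γ₂`, the sum exceeds the maximal entry. -/
lemma lemB {n : ℕ} (x : Fin n → ℝ) (i0 : Fin n) (hmax : ∀ i, x i ≤ x i0)
    (h1 : 0 < s1 x) (h2 : 0 < s2 x) : x i0 < s1 x := by
  have hn0 : (0:ℝ) < n := by exact_mod_cast i0.pos
  have hle : s1 x ≤ (n : ℝ) * x i0 := by
    have h := Finset.sum_le_sum (fun i (_ : i ∈ (Finset.univ : Finset (Fin n))) => hmax i)
    simpa [s1, Finset.sum_const, Finset.card_univ, nsmul_eq_mul] using h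
  have hx0 : 0 < x i0 := by nlinarith
  have hQ : (x i0) ^ 2 ≤ ∑ i, (x i) ^ 2 :=
    Finset.single_le_sum (fun i _ => sq_nonneg (x i)) (Finset.mem_univ i0)
  have h2' : (s1 x) ^ 2 - ∑ i, (x i) ^ 2 = 2 * s2 x := by simp only [s1, s2]; ring
  by_contra hcon
  push_neg at hcon
  have hsq : (s1 x) ^ 2 ≤ (x i0) ^ 2 := pow_le_pow_left₀ h1.le hcon 2
  linarith

set_option maxHeartbeats 1000000 in
/-- Key lemma: `σ₁ > 0`, `σ₂ > 0`, `σ₃ ≥ 0` imply `σ₂` of the vector with the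
largest entry removed is nonnegative. -/
lemma keyA {n : ℕ} (x : Fin n → ℝ) (i0 : Fin n) (hmax : ∀ i, x i ≤ x i0)
    (h1 : 0 < s1 x) (h2 : 0 < s2 x) (h3 : 0 ≤ s3 x) :
    0 ≤ s2 x - x i0 * (s1 x - x i0) := by
  classical
  set x0 := x i0 with hx0_def
  set t := ∑ i ∈ Finset.univ.erase i0, x i with ht_def
  set Q := ∑ i ∈ Finset.univ.erase i0, (x i) ^ 2 with hQ_def
  set P := ∑ i ∈ Finset.univ.erase i0, (x i) ^ 3 with hP_def
  have hT : x0 + t = ∑ i, x i := Finset.add_sum_erase _ x (Finset.mem_univ i0)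
  have hQs : x0 ^ 2 + Q = ∑ i, (x i) ^ 2 :=
    Finset.add_sum_erase _ (fun i => (x i) ^ 2) (Finset.mem_univ i0)
  have hPs : x0 ^ 3 + P = ∑ i, (x i) ^ 3 :=
    Finset.add_sum_erase _ (fun i => (x i) ^ 3) (Finset.mem_univ i0)
  have e1 : s1 x = x0 + t := by simp only [s1]; exact hT.symm
  have e2 : s2 x = ((x0 + t) ^ 2 - (x0 ^ 2 + Q)) / 2 := by
    simp only [s2]; rw [← hT, ← hQs]
  have e3 : s3 x = ((x0 + t) ^ 3 - 3 * (x0 + t) * (x0 ^ 2 + Q) + 2 * (x0 ^ 3 + P)) / 6 := by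
    simp only [s3]; rw [← hT, ← hQs, ← hPs]
  have hQnn : 0 ≤ Q := Finset.sum_nonneg fun i _ => sq_nonneg _
  have hx0 : 0 < x0 := by
    have hn0 : (0:ℝ) < n := by exact_mod_cast i0.pos
    have hle : s1 x ≤ (n : ℝ) * x0 := by
      have h := Finset.sum_le_sum (fun i (_ : i ∈ (Finset.univ : Finset (Fin n))) => hmax i)
      simpa [s1, Finset.sum_const, Finset.card_univ, nsmul_eq_mul] using h
    nlinarith
  have h1' : 0 < x0 + t := by rw [← e1]; exact h1
  have h2' : 0 < ((x0 + t) ^ 2 - (x0 ^ 2 + Q)) / 2 := by rw [← e2]; exact h2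
  have h3' : 0 ≤ ((x0 + t) ^ 3 - 3 * (x0 + t) * (x0 ^ 2 + Q) + 2 * (x0 ^ 3 + P)) / 6 := by
    rw [← e3]; exact h3
  have ht : 0 < t := by
    by_contra hcon
    push_neg at hcon
    have hmul : 0 ≤ (-t) * (2 * x0 + t) :=
      mul_nonneg (neg_nonneg.mpr hcon) (by linarith)
    nlinarith [hmul, h2', hQnn]
  -- Newton-type inequality  t * r ≤ q²
  set z := Real.sqrt Q with hz_def
  have hznn : 0 ≤ z := Real.sqrt_nonneg _
  have hz2 : z ^ 2 = Q := Real.sq_sqrt hQnn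
  have hPz : P ≤ z * Q := by
    have h := sum_cube_le (Finset.univ.erase i0) x
    rw [← hQ_def, ← hP_def, ← hz_def] at h
    exact h
  have hkey : t * ((t ^ 3 - 3 * t * Q + 2 * P) / 6) ≤ ((t ^ 2 - Q) / 2) ^ 2 := by
    have h4 : 4 * t * P ≤ 4 * t * (z * Q) := by
      have := mul_le_mul_of_nonneg_left hPz (by linarith : (0:ℝ) ≤ 4 * t)
      linarith
    have h5 : 4 * t * (z * Q) ≤ t ^ 4 + 3 * Q ^ 2 := by
      have key : 0 ≤ (t - z) ^ 2 * ((t + z) ^ 2 + 2 * z ^ 2) := by positivity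
      rw [← hz2]
      linarith [key]
    linarith [h4, h5]
  -- conclude
  rw [e1, e2]
  by_contra hcon
  push_neg at hcon
  have hq : (t ^ 2 - Q) / 2 < 0 := by linarith [hcon]
  have hA : 0 ≤ t * (x0 * ((t ^ 2 - Q) / 2) + (t ^ 3 - 3 * t * Q + 2 * P) / 6) :=
    mul_nonneg ht.le (by linarith [h3'])
  have hB : 0 < (x0 * t + (t ^ 2 - Q) / 2) * (-((t ^ 2 - Q) / 2)) :=
    mul_pos (by linarith [h2']) (by linarith)
  linarith [hkey, hA, hB]

theorem stmt_3 (n : ℕ) (hn : 3 ≤ n) (l : Fin n → ℝ)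
    (hsort : ∀ i j : Fin n, i ≤ j → l j ≤ l i) (hG : l ∈ Gamma2)
    (a : ℝ) (ha : 0 < a)
    (ha' : a ≤ Real.sqrt (s2 l / (3 * ((n : ℝ) - 1) * ((n : ℝ) - 2))))
    (hs3 : 0 ≤ s3 (fun i => l i + a))
    (hlarge : 6 * ((n : ℝ) - 2) * a < l ⟨0, by omega⟩) :
    s2 l + (((n : ℝ) - 1) * ((n : ℝ) - 2) / 2) * a ^ 2 ≤ (7 / 6) * s2 l ∧
      (5 / 6) * ((s1 l - l ⟨0, by omega⟩) * l ⟨0, by omega⟩) ≤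
        s2 l + (((n : ℝ) - 1) * ((n : ℝ) - 2) / 2) * a ^ 2 := by
  obtain ⟨hG1, hG2⟩ := hG
  have hn0 : 0 < n := by omega
  have hn3 : (3:ℝ) ≤ (n : ℝ) := by exact_mod_cast hn
  set i0 : Fin n := ⟨0, hn0⟩ with hi0_def
  have h0le : ∀ i : Fin n, i0 ≤ i := fun i => by
    simp [i0, Fin.le_def]
  have hmax : ∀ i, l i ≤ l i0 := fun i => hsort i0 i (h0le i)
  -- first inequality
  have hD : (0:ℝ) < 3 * ((n:ℝ) - 1) * ((n:ℝ) - 2) := by nlinarith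
  have hXnn : 0 ≤ s2 l / (3 * ((n:ℝ) - 1) * ((n:ℝ) - 2)) := (div_pos hG2 hD).le
  have ha2 : a ^ 2 ≤ s2 l / (3 * ((n:ℝ) - 1) * ((n:ℝ) - 2)) := by
    have hmm := mul_le_mul ha' ha' ha.le (Real.sqrt_nonneg _)
    have hss := Real.sq_sqrt hXnn
    nlinarith [hmm, hss]
  have hCa : a ^ 2 * (3 * ((n:ℝ) - 1) * ((n:ℝ) - 2)) ≤ s2 l := (le_div_iff₀ hD).mp ha2
  -- sum expansions for μ = l + a
  have hs1raw : (∑ i, (l i + a)) = (∑ i, l i) + (n:ℝ) * a := by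
    rw [Finset.sum_add_distrib, Finset.sum_const, Finset.card_univ, Fintype.card_fin,
      nsmul_eq_mul]
  have hsum2 : ∑ i, (l i + a) ^ 2 = (∑ i, (l i) ^ 2) + 2 * a * (∑ i, l i) + (n:ℝ) * a ^ 2 := by
    have h : ∀ i : Fin n, (l i + a) ^ 2 = (l i) ^ 2 + 2 * a * (l i) + a ^ 2 := fun i => by ring
    rw [Finset.sum_congr rfl (fun i _ => h i), Finset.sum_add_distrib, Finset.sum_add_distrib,
      ← Finset.mul_sum, Finset.sum_const, Finset.card_univ, Fintype.card_fin, nsmul_eq_mul]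
  have hs1mu : s1 (fun i => l i + a) = s1 l + (n:ℝ) * a := by
    simp only [s1]; exact hs1raw
  have hs2mu : s2 (fun i => l i + a)
      = s2 l + ((n:ℝ) - 1) * a * (s1 l) + ((n:ℝ) * ((n:ℝ) - 1) / 2) * a ^ 2 := by
    simp only [s1, s2]
    rw [hs1raw, hsum2]
    ring
  -- apply keyA to μ
  have h1mu : 0 < s1 (fun i => l i + a) := by
    rw [hs1mu]
    nlinarith [mul_pos (show (0:ℝ) < (n:ℝ) by linarith) ha]
  have h2mu : 0 < s2 (fun i => l i + a) := by
    rw [hs2mu]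
    nlinarith [mul_pos (show (0:ℝ) < (n:ℝ) - 1 by linarith) (mul_pos ha hG1),
      mul_pos (mul_pos (show (0:ℝ) < (n:ℝ) by linarith) (show (0:ℝ) < (n:ℝ) - 1 by linarith))
        (mul_pos ha ha)]
  have hmaxmu : ∀ i, (fun i => l i + a) i ≤ (fun i => l i + a) i0 := fun i => by
    simpa using add_le_add_right (hmax i) a
  have hkq := keyA (fun i => l i + a) i0 hmaxmu h1mu h2mu hs3
  simp only [hs1mu, hs2mu] at hkq
  have hs : l i0 < s1 l := lemB l i0 hmax hG1 hG2
  have hlarge' : 6 * ((n : ℝ) - 2) * a < l i0 := hlarge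
  constructor
  · linarith
  · show (5 / 6) * ((s1 l - l i0) * l i0) ≤
      s2 l + (((n : ℝ) - 1) * ((n : ℝ) - 2) / 2) * a ^ 2
    nlinarith [hkq, mul_pos (show (0:ℝ) < l i0 - 6 * ((n:ℝ) - 2) * a by linarith)
      (show (0:ℝ) < s1 l - l i0 by linarith)]
end

section
/- If λ = (λ₁,...,λₙ) ∈ closure(Γ₃) with λ₁ ≥ ... ≥ λₙ, then removing the largest entry stays in closure(Γ₂): (λ₂,...,λₙ) ∈ closure(Γ₂) in ℝ^{n−1}. -/
open Finset

/-- Crux algebraic lemma: if `q > p²` (i.e. σ₂ of the tail is negative), `q ≥ b²`, `r ≤ b q`,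
`b > 0`, `p ≥ 0`, then `σ₃ + b σ₂ < 0` in power-sum form. -/
lemma crux (b p q r : ℝ) (hb : 0 < b) (hp : 0 ≤ p) (hq2 : p ^ 2 < q) (hqb : b ^ 2 ≤ q)
    (hr : r ≤ b * q) : p ^ 3 - 3 * p * q + 2 * r + 3 * b * p ^ 2 - 3 * b * q < 0 := by
  rcases le_or_gt b p with h | h
  · nlinarith [mul_pos (show (0:ℝ) < 3 * p + b by linarith) (show (0:ℝ) < q - p ^ 2 by linarith),
      mul_nonneg (mul_nonneg hp hp) (sub_nonneg.2 h)]
  · nlinarith [mul_nonneg (show (0:ℝ) ≤ 3 * p + b by linarith)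
        (show (0:ℝ) ≤ q - b ^ 2 by linarith),
      mul_pos (show (0:ℝ) < b - p by linarith)
        (show (0:ℝ) < b ^ 2 + 4 * p * b + p ^ 2 by nlinarith)]

/-- If `a + t ≥ 0`, `(a+t)² - a² - Q ≥ 0` and `t² ≤ M Q` with `M ≥ 1`, then `t ≥ 0`. -/
lemma tail_sum_nonneg_aux (M a t Q : ℝ) (hM : 1 ≤ M) (h1 : 0 ≤ a + t)
    (h2 : 0 ≤ (a + t) ^ 2 - a ^ 2 - Q) (hQ : t ^ 2 ≤ M * Q) : 0 ≤ t := by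
  by_contra ht
  push_neg at ht
  have hat : (a + t) * (-t) ≥ 0 := mul_nonneg h1 (by linarith)
  have hQ' : Q ≤ - t ^ 2 := by nlinarith
  have hMQ : M * Q ≤ M * (- t ^ 2) := by
    apply mul_le_mul_of_nonneg_left hQ' (by linarith)
  have ht2 : 0 < t ^ 2 := by nlinarith
  nlinarith

lemma s1_continuous {n : ℕ} : Continuous (s1 (n := n)) :=
  continuous_finset_sum _ fun i _ => continuous_apply i

lemma s2_continuous {n : ℕ} : Continuous (s2 (n := n)) := by
  apply Continuous.div_const
  exact ((s1_continuous (n := n)).pow 2).sub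
    (continuous_finset_sum _ fun i _ => (continuous_apply i).pow 2)

lemma s3_continuous {n : ℕ} : Continuous (s3 (n := n)) := by
  apply Continuous.div_const
  have hs : Continuous fun x : Fin n → ℝ => ∑ i, x i := s1_continuous
  have hs2 : Continuous fun x : Fin n → ℝ => ∑ i, (x i) ^ 2 :=
    continuous_finset_sum _ fun i _ => (continuous_apply i).pow 2
  have hs3 : Continuous fun x : Fin n → ℝ => ∑ i, (x i) ^ 3 :=
    continuous_finset_sum _ fun i _ => (continuous_apply i).pow 3
  exact ((hs.pow 3).sub ((continuous_const.mul hs).mul hs2)).add (continuous_const.mul hs3)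

lemma closure_gamma3_sub {n : ℕ} :
    closure (Gamma3 (n := n)) ⊆ {x | 0 ≤ s1 x ∧ 0 ≤ s2 x ∧ 0 ≤ s3 x} := by
  apply closure_minimal
  · exact fun x hx => ⟨hx.1.le, hx.2.1.le, hx.2.2.le⟩
  · exact (isClosed_le continuous_const s1_continuous).inter
      ((isClosed_le continuous_const s2_continuous).inter
        (isClosed_le continuous_const s3_continuous))

/-- Nonnegativity of the first two symmetric functions puts a point in the closure of Γ₂,
provided the dimension is at least 2. -/
lemma mem_closure_gamma2 {n : ℕ} (hn : 2 ≤ n) (x : Fin n → ℝ)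
    (h1 : 0 ≤ ∑ i, x i) (h2 : ∑ i, (x i) ^ 2 ≤ (∑ i, x i) ^ 2) :
    x ∈ closure (Gamma2 (n := n)) := by
  have hN : (2:ℝ) ≤ (n : ℝ) := by exact_mod_cast hn
  apply mem_closure_of_tendsto (f := fun k : ℕ => fun i : Fin n => x i + 1 / ((k : ℝ) + 1))
    (b := Filter.atTop)
  · rw [tendsto_pi_nhds]
    intro i
    simpa using tendsto_const_nhds.add (tendsto_one_div_add_atTop_nhds_zero_nat :
      Filter.Tendsto (fun n : ℕ => 1 / ((n : ℝ) + 1)) Filter.atTop (nhds 0))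
  · apply Filter.Eventually.of_forall
    intro k
    set ε : ℝ := 1 / ((k : ℝ) + 1) with hεdef
    have hε : 0 < ε := by positivity
    have hsum : ∑ i, (x i + ε) = (∑ i, x i) + (n : ℝ) * ε := by
      rw [Finset.sum_add_distrib, Finset.sum_const, card_univ]
      simp [nsmul_eq_mul, Fintype.card_fin]
    have hsum2 : ∑ i, (x i + ε) ^ 2 =
        (∑ i, (x i) ^ 2) + 2 * ε * (∑ i, x i) + (n : ℝ) * ε ^ 2 := by
      have he : ∀ i : Fin n, (x i + ε) ^ 2 = (x i) ^ 2 + 2 * ε * x i + ε ^ 2 := fun i => by ring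
      rw [Finset.sum_congr rfl fun i _ => he i, Finset.sum_add_distrib, Finset.sum_add_distrib,
        ← Finset.mul_sum, Finset.sum_const, card_univ]
      simp [nsmul_eq_mul, Fintype.card_fin]
    constructor
    · show 0 < s1 _
      unfold s1
      rw [hsum]
      nlinarith
    · show 0 < s2 _
      unfold s2
      rw [hsum, hsum2]
      have e1 : 0 ≤ ε * (∑ i, x i) * ((n : ℝ) - 1) :=
        mul_nonneg (mul_nonneg hε.le h1) (by linarith)
      have e2 : 0 < ε ^ 2 * ((n : ℝ) * (n : ℝ) - (n : ℝ)) := by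
        apply mul_pos (by positivity)
        nlinarith
      have key : 0 < ((∑ i, x i) + (n : ℝ) * ε) ^ 2 -
          ((∑ i, (x i) ^ 2) + 2 * ε * (∑ i, x i) + (n : ℝ) * ε ^ 2) := by
        nlinarith [e1, e2, h2]
      linarith

theorem stmt_18 (m : ℕ) (l : Fin (m + 1) → ℝ)
    (hsort : ∀ i j : Fin (m + 1), i ≤ j → l j ≤ l i)
    (hG : l ∈ closure (Gamma3 (n := m + 1))) :
    (fun j : Fin m => l j.succ) ∈ closure (Gamma2 (n := m)) := by
  match m with
  | 0 =>
    exfalso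
    have hempty : Gamma3 (n := 1) = ∅ := by
      ext x
      simp [Gamma3, s2]
    rw [hempty, closure_empty] at hG
    exact hG
  | 1 =>
    exfalso
    have hempty : Gamma3 (n := 2) = ∅ := by
      ext x
      suffices h : s3 x = 0 by simp [Gamma3, h]
      simp only [s3, Fin.sum_univ_two]
      ring
    rw [hempty, closure_empty] at hG
    exact hG
  | (m + 2) =>
    obtain ⟨h1, h2, h3⟩ := closure_gamma3_sub hG
    set a : ℝ := l 0 with ha
    set b : ℝ := l 1 with hb
    set p : ℝ := ∑ j : Fin (m + 2), l j.succ with hp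
    set q : ℝ := ∑ j : Fin (m + 2), (l j.succ) ^ 2 with hq
    set r : ℝ := ∑ j : Fin (m + 2), (l j.succ) ^ 3 with hr
    have hP : ∑ i, l i = a + p := Fin.sum_univ_succ l
    have hQ : ∑ i, (l i) ^ 2 = a ^ 2 + q := Fin.sum_univ_succ fun i => (l i) ^ 2
    have hR : ∑ i, (l i) ^ 3 = a ^ 3 + r := Fin.sum_univ_succ fun i => (l i) ^ 3
    have h1' : 0 ≤ a + p := by rw [← hP]; exact h1
    have h2' : 0 ≤ (a + p) ^ 2 - (a ^ 2 + q) := by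
      have := h2
      unfold s2 at this
      rw [hP, hQ] at this
      linarith
    have h3' : 0 ≤ (a + p) ^ 3 - 3 * (a + p) * (a ^ 2 + q) + 2 * (a ^ 3 + r) := by
      have := h3
      unfold s3 at this
      rw [hP, hQ, hR] at this
      linarith
    have hba : b ≤ a := hsort 0 1 (Fin.zero_le 1)
    have hbmax : ∀ j : Fin (m + 2), l j.succ ≤ b := by
      intro j
      have h01 : (1 : Fin (m + 3)) = (0 : Fin (m + 2)).succ := by
        simp [Fin.ext_iff]
      rw [hb, h01]
      exact hsort _ _ (Fin.succ_le_succ_iff.2 (Fin.zero_le j))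
    -- Cauchy-Schwarz
    have hCS : p ^ 2 ≤ ((m : ℝ) + 2) * q := by
      have := sq_sum_le_card_mul_sum_sq (s := (univ : Finset (Fin (m + 2))))
        (f := fun j : Fin (m + 2) => l j.succ)
      rw [card_univ, Fintype.card_fin] at this
      rw [hp, hq]
      push_cast at this
      linarith
    have hp0 : 0 ≤ p :=
      tail_sum_nonneg_aux ((m : ℝ) + 2) a p q (by linarith [Nat.cast_nonneg (α := ℝ) m])
        h1' (by linarith) hCS
    -- q ≥ b²
    have hqb : b ^ 2 ≤ q := by
      have h0 : ((l (0 : Fin (m + 2)).succ) ^ 2 : ℝ) ≤ q := by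
        rw [hq]
        exact Finset.single_le_sum (f := fun j : Fin (m + 2) => (l j.succ) ^ 2)
          (fun i _ => sq_nonneg _) (Finset.mem_univ (0 : Fin (m + 2)))
      have h01 : ((0 : Fin (m + 2)).succ : Fin (m + 3)) = 1 := by
        simp [Fin.ext_iff]
      rwa [h01] at h0
    -- r ≤ b q
    have hrq : r ≤ b * q := by
      rw [hr, hq, Finset.mul_sum]
      apply Finset.sum_le_sum
      intro i _
      nlinarith [mul_le_mul_of_nonneg_right (hbmax i) (sq_nonneg (l i.succ)), sq_nonneg (l i.succ)]
    have hpb : p ≤ ((m : ℝ) + 2) * b := by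
      have := Finset.sum_le_sum (fun i (_ : i ∈ (univ : Finset (Fin (m + 2)))) => hbmax i)
      rw [Finset.sum_const, card_univ, Fintype.card_fin] at this
      rw [hp]
      simpa [nsmul_eq_mul] using this
    clear_value a b p q r
    -- main claim : q ≤ p²
    have hqp : q ≤ p ^ 2 := by
      by_contra hlt
      push_neg at hlt
      -- a p > 0
      have hap : 0 < a * p := by nlinarith
      have hppos : 0 < p := by
        rcases lt_trichotomy p 0 with h | h | h
        · nlinarith
        · rw [h] at hap; simp at hap
        · exact h
      have hapos : 0 < a := by nlinarith
      -- b > 0 since p ≤ (m+2) b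
      have hbpos : 0 < b := by
        by_contra hb0
        push_neg at hb0
        have : ((m : ℝ) + 2) * b ≤ 0 :=
          mul_nonpos_of_nonneg_of_nonpos (by positivity) hb0
        linarith
      -- s3 ≥ 0 gives p³ - 3pq + 2r + 3a(p²-q) ≥ 0
      have hid1 : (a + p) ^ 3 - 3 * (a + p) * (a ^ 2 + q) + 2 * (a ^ 3 + r)
          = p ^ 3 - 3 * p * q + 2 * r + 3 * a * (p ^ 2 - q) := by ring
      have hkey : 0 ≤ p ^ 3 - 3 * p * q + 2 * r + 3 * a * (p ^ 2 - q) := by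
        rw [← hid1]; exact h3'
      have hprod : 0 ≤ (a - b) * (q - p ^ 2) := mul_nonneg (by linarith) (by linarith)
      have hid2 : p ^ 3 - 3 * p * q + 2 * r + 3 * b * p ^ 2 - 3 * b * q
          = (p ^ 3 - 3 * p * q + 2 * r + 3 * a * (p ^ 2 - q)) + 3 * ((a - b) * (q - p ^ 2)) := by
        ring
      have hkey2 : 0 ≤ p ^ 3 - 3 * p * q + 2 * r + 3 * b * p ^ 2 - 3 * b * q := by
        rw [hid2]; linarith
      exact absurd hkey2 (not_le.2 (crux b p q r hbpos hp0 hlt hqb hrq))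
    exact mem_closure_gamma2 (by omega) _ (by rw [← hp]; exact hp0) (by rw [← hq, ← hp]; exact hqp)
end
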